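/- Let m, M > 0 with 2M > m. There exists a constant c > 0, depending only on m and M, such that for all nonzero ξ₁, ξ₂ ∈ ℝ² and every choice of signs s₁, s₂ ∈ {+1, −1}, one has |μ^{s₁,s₂}(ξ₁, ξ₂)| ≥ c·min(⟨ξ₁⟩, ⟨ξ₂⟩)·∠(s₁ξ₁, s₂ξ₂)². -/
import Mathlib

noncomputable section

/-- ℝ² as a Euclidean space. -/
abbrev E2 := EuclideanSpace ℝ (Fin 2)

/-- The Japanese bracket `⟨ξ⟩_M = √(M² + |ξ|²)`. -/
def jb (M : ℝ) (ξ : E2) : ℝ := Real.sqrt (M ^ 2 + ‖ξ‖ ^ 2)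

/-- The resonance function `μ^{s₁,s₂}(ξ₁,ξ₂) = ⟨ξ₁-ξ₂⟩_m + s₁⟨ξ₁⟩_M - s₂⟨ξ₂⟩_M`. -/
def resonance (m M s₁ s₂ : ℝ) (ξ₁ ξ₂ : E2) : ℝ :=
  jb m (ξ₁ - ξ₂) + s₁ * jb M ξ₁ - s₂ * jb M ξ₂

open InnerProductGeometry Real
open scoped RealInnerProductSpace

lemma jb_nonneg (M : ℝ) (ξ : E2) : 0 ≤ jb M ξ := Real.sqrt_nonneg _

lemma jb_sq (M : ℝ) (ξ : E2) : jb M ξ ^ 2 = M ^ 2 + ‖ξ‖ ^ 2 :=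
  Real.sq_sqrt (by positivity)

lemma my_le_of_sq_le_sq {a b : ℝ} (hb : 0 ≤ b) (h : a ^ 2 ≤ b ^ 2) (ha : 0 ≤ a) : a ≤ b := by
  nlinarith

lemma jb_le (M : ℝ) (hM : 0 ≤ M) (ξ : E2) : jb M ξ ≤ M + ‖ξ‖ := by
  have := jb_sq M ξ; have h0 := jb_nonneg M ξ
  nlinarith [norm_nonneg ξ]

lemma norm_le_jb (M : ℝ) (ξ : E2) : ‖ξ‖ ≤ jb M ξ := by
  have := jb_sq M ξ; have h0 := jb_nonneg M ξ
  nlinarith [norm_nonneg ξ]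

lemma M_le_jb (M : ℝ) (hM : 0 ≤ M) (ξ : E2) : M ≤ jb M ξ := by
  have := jb_sq M ξ; have h0 := jb_nonneg M ξ
  nlinarith [norm_nonneg ξ]

lemma jb_neg (M : ℝ) (ξ : E2) : jb M (-ξ) = jb M ξ := by simp [jb]

lemma jb_one_le (M : ℝ) (hM : 0 < M) (ξ : E2) : min M 1 * jb 1 ξ ≤ jb M ξ := by
  have hμ0 : 0 < min M 1 := lt_min hM one_pos
  have h1 : min M 1 ≤ M := min_le_left _ _
  have h2 : min M 1 ≤ 1 := min_le_right _ _
  apply my_le_of_sq_le_sq (jb_nonneg M ξ) _ (mul_nonneg hμ0.le (jb_nonneg 1 ξ))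
  rw [mul_pow, jb_sq, jb_sq]
  have e1 : min M 1 ^ 2 ≤ M ^ 2 := by nlinarith
  have e2 : min M 1 ^ 2 ≤ 1 := by nlinarith
  nlinarith [sq_nonneg ‖ξ‖]

lemma jb_mul_jb_ge (M : ℝ) (hM : 0 < M) (a b : E2) :
    M ^ 2 + ‖a‖ * ‖b‖ ≤ jb M a * jb M b := by
  apply my_le_of_sq_le_sq (mul_nonneg (jb_nonneg M a) (jb_nonneg M b)) _ (by positivity)
  rw [mul_pow, jb_sq, jb_sq]
  nlinarith [norm_nonneg a, norm_nonneg b, sq_nonneg (M * ‖a‖ - M * ‖b‖)]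

/-- The constant in the resonance estimate. -/
def rc (m M : ℝ) : ℝ :=
  2 * min 1 (min (m ^ 2) (4 * M ^ 2 - m ^ 2) / (2 * M ^ 2)) * min M 1 / (π ^ 2 * (m / M + 6))

lemma rc_pos (m M : ℝ) (hm : 0 < m) (hM : 0 < M) (hmM : m < 2 * M) : 0 < rc m M := by
  have h4 : 0 < 4 * M ^ 2 - m ^ 2 := by nlinarith
  have hπ := Real.pi_pos
  have h1 : 0 < min 1 (min (m ^ 2) (4 * M ^ 2 - m ^ 2) / (2 * M ^ 2)) :=
    lt_min one_pos (div_pos (lt_min (by positivity) h4) (by positivity))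
  have h2 : 0 < min M 1 := lt_min hM one_pos
  have h3 : 0 < m / M + 6 := by positivity
  unfold rc; positivity

set_option maxHeartbeats 1000000 in
/-- Core estimate. -/
lemma core (m M : ℝ) (hm : 0 < m) (hM : 0 < M) (hmM : m < 2 * M)
    (a b : E2) (D den μ : ℝ)
    (hD : min (m ^ 2) (4 * M ^ 2 - m ^ 2) ≤ D + 2 * M ^ 2)
    (hden : 0 < den) (hdub : den ≤ (m / M + 6) * max (jb M a) (jb M b))
    (hid : μ * den = D + 2 * (jb M a * jb M b - ⟪a, b⟫)) :
    rc m M * min (jb 1 a) (jb 1 b) * angle a b ^ 2 ≤ μ := by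
  have hπ := Real.pi_pos
  set x := ‖a‖ with hx
  set y := ‖b‖ with hy
  have hx0 : 0 ≤ x := norm_nonneg a
  have hy0 : 0 ≤ y := norm_nonneg b
  set A := jb M a with hA
  set B := jb M b with hB
  have hA0 : 0 < A := lt_of_lt_of_le hM (M_le_jb M hM.le a)
  have hB0 : 0 < B := lt_of_lt_of_le hM (M_le_jb M hM.le b)
  set θ := angle a b with hθ
  have hθ0 : 0 ≤ θ := angle_nonneg a b
  have hθπ : θ ≤ π := angle_le_pi a b
  have hcos : Real.cos θ * (x * y) = ⟪a, b⟫ := cos_angle_mul_norm_mul_norm a b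
  set c0 := Real.cos θ with hc0
  have hc1 : c0 ≤ 1 := Real.cos_le_one θ
  have hc2 : -1 ≤ c0 := Real.neg_one_le_cos θ
  have hPxy : x * y ≤ A * B := by nlinarith [jb_mul_jb_ge M hM a b]
  have hPW : M ^ 2 + ⟪a, b⟫ ≤ A * B := by
    nlinarith [jb_mul_jb_ge M hM a b, real_inner_le_norm a b]
  have hW2 : A * B * (1 - c0) ≤ 2 * (A * B - ⟪a, b⟫) := by
    rw [← hcos]
    rcases le_total 0 c0 with h | h
    · nlinarith
    · nlinarith [mul_nonneg hx0 hy0]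
  set ε := min (m ^ 2) (4 * M ^ 2 - m ^ 2) with hε
  have hε0 : 0 < ε := lt_min (by positivity) (by nlinarith)
  set t := min 1 (ε / (2 * M ^ 2)) with ht
  have ht0 : 0 < t := lt_min one_pos (by positivity)
  have ht1 : t ≤ 1 := min_le_left _ _
  have ht2 : 2 * t * M ^ 2 ≤ ε := by
    have h : t ≤ ε / (2 * M ^ 2) := min_le_right _ _
    rw [le_div_iff₀ (by positivity : (0:ℝ) < 2 * M ^ 2)] at h
    linarith
  have hnum : t * (A * B * (1 - c0)) ≤ D + 2 * (A * B - ⟪a, b⟫) := by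
    have hWM : M ^ 2 ≤ A * B - ⟪a, b⟫ := by linarith
    have p1 : 0 ≤ (1 - t) * (A * B - ⟪a, b⟫ - M ^ 2) :=
      mul_nonneg (by linarith) (by linarith)
    have p2 : 0 ≤ t * (2 * (A * B - ⟪a, b⟫) - A * B * (1 - c0)) :=
      mul_nonneg ht0.le (by linarith)
    linarith [p1, p2]
  have hJ : 2 / π ^ 2 * θ ^ 2 ≤ 1 - c0 := by
    have := Real.cos_le_one_sub_mul_cos_sq (x := θ) (by rw [abs_of_nonneg hθ0]; exact hθπ)
    linarith
  -- min comparison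
  have hm0 : (0:ℝ) < min M 1 := lt_min hM one_pos
  have hmin : min M 1 * min (jb 1 a) (jb 1 b) ≤ min A B := by
    apply le_min
    · exact le_trans (mul_le_mul_of_nonneg_left (min_le_left _ _) hm0.le) (jb_one_le M hM a)
    · exact le_trans (mul_le_mul_of_nonneg_left (min_le_right _ _) hm0.le) (jb_one_le M hM b)
  set Mo := min M 1 with hMo
  set K := m / M + 6 with hK
  have hK0 : (0:ℝ) < K := by rw [hK]; positivity
  set J := max A B with hJmax
  have hJ0 : 0 < J := lt_of_lt_of_le hA0 (le_max_left _ _)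
  have hrc : rc m M = 2 * t * Mo / (π ^ 2 * K) := by
    rw [ht, hε, hMo, hK, rc]
  have hmin10 : 0 ≤ min (jb 1 a) (jb 1 b) := le_min (jb_nonneg 1 a) (jb_nonneg 1 b)
  have hL0 : 0 ≤ rc m M * min (jb 1 a) (jb 1 b) * θ ^ 2 := by
    have := rc_pos m M hm hM hmM
    positivity
  apply le_of_mul_le_mul_right _ hden
  have e1 : rc m M * min (jb 1 a) (jb 1 b) * θ ^ 2 * den ≤
      rc m M * min (jb 1 a) (jb 1 b) * θ ^ 2 * (K * J) :=
    mul_le_mul_of_nonneg_left hdub hL0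
  have e2 : Mo * min (jb 1 a) (jb 1 b) * J ≤ A * B := by
    rw [← min_mul_max A B]
    exact mul_le_mul_of_nonneg_right hmin hJ0.le
  have e3 : rc m M * min (jb 1 a) (jb 1 b) * θ ^ 2 * (K * J) =
      2 * t / π ^ 2 * θ ^ 2 * (Mo * min (jb 1 a) (jb 1 b) * J) := by
    rw [hrc]; field_simp
  have e4 : 2 * t / π ^ 2 * θ ^ 2 * (Mo * min (jb 1 a) (jb 1 b) * J) ≤
      2 * t / π ^ 2 * θ ^ 2 * (A * B) :=
    mul_le_mul_of_nonneg_left e2 (by positivity)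
  have e5 : 2 * t / π ^ 2 * θ ^ 2 * (A * B) = t * (A * B * (2 / π ^ 2 * θ ^ 2)) := by ring
  have e6 : t * (A * B * (2 / π ^ 2 * θ ^ 2)) ≤ t * (A * B * (1 - c0)) := by
    apply mul_le_mul_of_nonneg_left _ ht0.le
    exact mul_le_mul_of_nonneg_left hJ (by positivity)
  rw [hid]
  calc rc m M * min (jb 1 a) (jb 1 b) * θ ^ 2 * den
      ≤ rc m M * min (jb 1 a) (jb 1 b) * θ ^ 2 * (K * J) := e1
    _ = 2 * t / π ^ 2 * θ ^ 2 * (Mo * min (jb 1 a) (jb 1 b) * J) := e3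
    _ ≤ 2 * t / π ^ 2 * θ ^ 2 * (A * B) := e4
    _ = t * (A * B * (2 / π ^ 2 * θ ^ 2)) := e5
    _ ≤ t * (A * B * (1 - c0)) := e6
    _ ≤ D + 2 * (A * B - ⟪a, b⟫) := hnum

/-- Case s₁ = s₂ (after normalization). -/
lemma caseA (m M : ℝ) (hm : 0 < m) (hM : 0 < M) (hmM : m < 2 * M) (a b : E2) :
    rc m M * min (jb 1 a) (jb 1 b) * angle a b ^ 2 ≤ jb m (a - b) + jb M a - jb M b := by
  have hA2 := jb_sq M a
  have hB2 := jb_sq M b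
  have hR2 := jb_sq m (a - b)
  have hab : ‖a - b‖ ^ 2 = ‖a‖ ^ 2 - 2 * ⟪a, b⟫ + ‖b‖ ^ 2 := norm_sub_sq_real a b
  have hA0 : M ≤ jb M a := M_le_jb M hM.le a
  have hB0 : M ≤ jb M b := M_le_jb M hM.le b
  have hR0 : m ≤ jb m (a - b) := M_le_jb m hm.le (a - b)
  have hABge := jb_mul_jb_ge M hM a b
  have hq := real_inner_le_norm a b
  have hden : 0 < jb m (a - b) + jb M b - jb M a := by
    rcases le_total (jb M a) (jb M b) with h | h
    · linarith
    · have h1 : (jb M a - jb M b) ^ 2 ≤ ‖a - b‖ ^ 2 := by nlinarith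
      nlinarith [jb_nonneg m (a - b), norm_nonneg (a - b)]
  have hdub : jb m (a - b) + jb M b - jb M a ≤ (m / M + 6) * max (jb M a) (jb M b) := by
    have f1 := jb_le m hm.le (a - b)
    have f2 : ‖a - b‖ ≤ ‖a‖ + ‖b‖ := norm_sub_le a b
    have f3 := norm_le_jb M a
    have f4 := norm_le_jb M b
    have f6 : jb M a ≤ max (jb M a) (jb M b) := le_max_left _ _
    have f7 : jb M b ≤ max (jb M a) (jb M b) := le_max_right _ _
    have f8 : m ≤ m / M * max (jb M a) (jb M b) := by
      rw [div_mul_eq_mul_div, le_div_iff₀ hM]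
      have : M ≤ max (jb M a) (jb M b) := le_trans hA0 f6
      nlinarith
    have f9 : (0:ℝ) ≤ m / M := by positivity
    nlinarith
  have hid : (jb m (a - b) + jb M a - jb M b) * (jb m (a - b) + jb M b - jb M a) =
      (m ^ 2 - 2 * M ^ 2) + 2 * (jb M a * jb M b - ⟪a, b⟫) := by
    linear_combination hR2 + hab - hA2 - hB2
  have hD : min (m ^ 2) (4 * M ^ 2 - m ^ 2) ≤ (m ^ 2 - 2 * M ^ 2) + 2 * M ^ 2 := by
    have := min_le_left (m ^ 2) (4 * M ^ 2 - m ^ 2); linarith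
  exact core m M hm hM hmM a b _ _ _ hD hden hdub hid

/-- Case s₁ = -1, s₂ = 1 (after normalization). -/
lemma caseB (m M : ℝ) (hm : 0 < m) (hM : 0 < M) (hmM : m < 2 * M) (a b : E2) :
    rc m M * min (jb 1 a) (jb 1 b) * angle a b ^ 2 ≤ jb M a + jb M b - jb m (a + b) := by
  have hA2 := jb_sq M a
  have hB2 := jb_sq M b
  have hR2 := jb_sq m (a + b)
  have hab : ‖a + b‖ ^ 2 = ‖a‖ ^ 2 + 2 * ⟪a, b⟫ + ‖b‖ ^ 2 := norm_add_sq_real a b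
  have hA0 : M ≤ jb M a := M_le_jb M hM.le a
  have hR0 : m ≤ jb m (a + b) := M_le_jb m hm.le (a + b)
  have hden : 0 < jb m (a + b) + jb M a + jb M b := by
    have := M_le_jb M hM.le b; linarith
  have hdub : jb m (a + b) + jb M a + jb M b ≤ (m / M + 6) * max (jb M a) (jb M b) := by
    have f1 := jb_le m hm.le (a + b)
    have f2 : ‖a + b‖ ≤ ‖a‖ + ‖b‖ := norm_add_le a b
    have f3 := norm_le_jb M a
    have f4 := norm_le_jb M b
    have f6 : jb M a ≤ max (jb M a) (jb M b) := le_max_left _ _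
    have f7 : jb M b ≤ max (jb M a) (jb M b) := le_max_right _ _
    have f8 : m ≤ m / M * max (jb M a) (jb M b) := by
      rw [div_mul_eq_mul_div, le_div_iff₀ hM]
      have : M ≤ max (jb M a) (jb M b) := le_trans hA0 f6
      nlinarith
    have f9 : (0:ℝ) ≤ m / M := by positivity
    nlinarith
  have hid : (jb M a + jb M b - jb m (a + b)) * (jb m (a + b) + jb M a + jb M b) =
      (2 * M ^ 2 - m ^ 2) + 2 * (jb M a * jb M b - ⟪a, b⟫) := by
    linear_combination - hR2 - hab + hA2 + hB2
  have hD : min (m ^ 2) (4 * M ^ 2 - m ^ 2) ≤ (2 * M ^ 2 - m ^ 2) + 2 * M ^ 2 := by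
    have := min_le_right (m ^ 2) (4 * M ^ 2 - m ^ 2); linarith
  exact core m M hm hM hmM a b _ _ _ hD hden hdub hid

/-- Case s₁ = 1, s₂ = -1 (after normalization). -/
lemma caseC (m M : ℝ) (hm : 0 < m) (hM : 0 < M) (hmM : m < 2 * M) (a b : E2) :
    rc m M * min (jb 1 a) (jb 1 b) * angle a b ^ 2 ≤ jb m (a + b) + jb M a + jb M b := by
  have hπ := Real.pi_pos
  have hrc0 := rc_pos m M hm hM hmM
  have hθ0 : 0 ≤ angle a b := angle_nonneg a b
  have hθπ : angle a b ≤ π := angle_le_pi a b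
  have hmin10 : 0 ≤ min (jb 1 a) (jb 1 b) := le_min (jb_nonneg 1 a) (jb_nonneg 1 b)
  have hm0 : (0:ℝ) < min M 1 := lt_min hM one_pos
  have hmin : min M 1 * min (jb 1 a) (jb 1 b) ≤ jb M a := by
    exact le_trans (mul_le_mul_of_nonneg_left (min_le_left _ _) hm0.le) (jb_one_le M hM a)
  have hrcπ : rc m M * π ^ 2 ≤ min M 1 := by
    have ht1 : min 1 (min (m ^ 2) (4 * M ^ 2 - m ^ 2) / (2 * M ^ 2)) ≤ 1 := min_le_left _ _
    have ht0 : 0 ≤ min 1 (min (m ^ 2) (4 * M ^ 2 - m ^ 2) / (2 * M ^ 2)) := by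
      apply le_min zero_le_one
      have h4 : 0 < 4 * M ^ 2 - m ^ 2 := by nlinarith
      positivity
    have hmm0 : (0:ℝ) ≤ m / M := by positivity
    rw [rc, div_mul_eq_mul_div, div_le_iff₀ (by positivity)]
    nlinarith [mul_nonneg (mul_nonneg (le_of_lt hm0) (sq_nonneg π)) hmm0,
      mul_nonneg (mul_nonneg (le_of_lt hm0) (sq_nonneg π))
        (by linarith : (0:ℝ) ≤ 6 - 2 * min 1 (min (m ^ 2) (4 * M ^ 2 - m ^ 2) / (2 * M ^ 2)))]
  have h1 : rc m M * min (jb 1 a) (jb 1 b) * angle a b ^ 2 ≤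
      rc m M * min (jb 1 a) (jb 1 b) * π ^ 2 := by
    apply mul_le_mul_of_nonneg_left _ (by positivity)
    nlinarith
  have h2 : rc m M * min (jb 1 a) (jb 1 b) * π ^ 2 ≤ min M 1 * min (jb 1 a) (jb 1 b) := by
    have := mul_le_mul_of_nonneg_right hrcπ hmin10
    nlinarith
  have h3 : min M 1 * min (jb 1 a) (jb 1 b) ≤ jb M a := hmin
  have h4 : 0 ≤ jb m (a + b) := jb_nonneg _ _
  have h5 : 0 ≤ jb M b := jb_nonneg _ _
  linarith

theorem stmt2 (m M : ℝ) (hm : 0 < m) (hM : 0 < M) (hmM : m < 2 * M) :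
    ∃ c : ℝ, 0 < c ∧ ∀ (ξ₁ ξ₂ : E2) (s₁ s₂ : ℝ),
      ξ₁ ≠ 0 → ξ₂ ≠ 0 →
      (s₁ = 1 ∨ s₁ = -1) → (s₂ = 1 ∨ s₂ = -1) →
      c * min (jb 1 ξ₁) (jb 1 ξ₂) *
          (InnerProductGeometry.angle (s₁ • ξ₁) (s₂ • ξ₂)) ^ 2 ≤
        |resonance m M s₁ s₂ ξ₁ ξ₂| := by
  refine ⟨rc m M, rc_pos m M hm hM hmM, ?_⟩
  intro ξ₁ ξ₂ s₁ s₂ h₁ h₂ hs₁ hs₂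
  rcases hs₁ with rfl | rfl <;> rcases hs₂ with rfl | rfl
  · -- (1,1): caseA
    have h := caseA m M hm hM hmM ξ₁ ξ₂
    have he : resonance m M 1 1 ξ₁ ξ₂ = jb m (ξ₁ - ξ₂) + jb M ξ₁ - jb M ξ₂ := by
      simp [resonance]
    rw [one_smul, one_smul, he]
    exact le_trans h (le_abs_self _)
  · -- (1,-1): caseC with a = ξ₁, b = -ξ₂
    have h := caseC m M hm hM hmM ξ₁ (-ξ₂)
    simp only [jb_neg] at h
    have he : resonance m M 1 (-1) ξ₁ ξ₂ = jb m (ξ₁ + -ξ₂) + jb M ξ₁ + jb M ξ₂ := by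
      simp only [resonance, sub_eq_add_neg, one_mul, neg_one_mul]
      ring
    rw [one_smul, neg_one_smul, he]
    exact le_trans h (le_abs_self _)
  · -- (-1,1): caseB with a = -ξ₁, b = ξ₂
    have h := caseB m M hm hM hmM (-ξ₁) ξ₂
    simp only [jb_neg] at h
    have he : resonance m M (-1) 1 ξ₁ ξ₂ =
        -(jb M ξ₁ + jb M ξ₂ - jb m (-ξ₁ + ξ₂)) := by
      have h2 : jb m (-ξ₁ + ξ₂) = jb m (ξ₁ - ξ₂) := by
        rw [show -ξ₁ + ξ₂ = -(ξ₁ - ξ₂) by abel, jb_neg]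
      simp only [resonance, h2, one_mul, neg_one_mul]
      ring
    rw [neg_one_smul, one_smul, he, abs_neg]
    exact le_trans h (le_abs_self _)
  · -- (-1,-1): caseA with a = -ξ₂, b = -ξ₁
    have h := caseA m M hm hM hmM (-ξ₂) (-ξ₁)
    have h3 : (-ξ₂) - (-ξ₁) = ξ₁ - ξ₂ := by abel
    rw [h3, jb_neg, jb_neg] at h
    simp only [jb_neg] at h
    have he : resonance m M (-1) (-1) ξ₁ ξ₂ = jb m (ξ₁ - ξ₂) + jb M ξ₂ - jb M ξ₁ := by
      simp only [resonance, neg_one_mul]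
      ring
    rw [neg_one_smul, neg_one_smul, he]
    refine le_trans ?_ (le_trans h (le_abs_self _))
    rw [min_comm (jb 1 ξ₂), angle_comm]
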